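/- arXiv:2106.02989 — 2 statements merged into one kernel-verified Lean document; each statement's English description precedes it below -/
import Mathlib

section
/- In a finite directed acyclic graph, the volume function defined recursively by vol(v) = outdeg(v) + Σ_{v→u} vol(u)/indeg(u) is well-defined (the recursion terminates), and the sum over all source nodes s (nodes with indeg = 0) of vol(s) equals the total number of edges, provided every non-source node has positive in-degree. -/
open Finset

def volAux {V : Type} [Fintype V] [DecidableEq V] (E : V → V → Prop) [DecidableRel E]
    (rank : V → ℕ) (v : V) : ℚ :=
  ((univ.filter (fun u => E v u)).card : ℚ)
    + ∑ u ∈ (univ.filter (fun u => E v u)).attach,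
        (if h : rank u.1 < rank v then volAux E rank u.1 else 0)
          / ((univ.filter (fun x => E x u.1)).card : ℚ)
termination_by rank v

theorem volAux_eq {V : Type} [Fintype V] [DecidableEq V] (E : V → V → Prop) [DecidableRel E]
    (rank : V → ℕ) (hacyc : ∀ u v, E u v → rank v < rank u) (v : V) :
    volAux E rank v = ((univ.filter (fun u => E v u)).card : ℚ)
      + ∑ u ∈ univ.filter (fun u => E v u),
          volAux E rank u / ((univ.filter (fun x => E x u)).card : ℚ) := by
  rw [volAux]
  congr 1
  rw [← Finset.sum_attach (univ.filter (fun u => E v u))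
    (fun u => volAux E rank u / ((univ.filter (fun x => E x u)).card : ℚ))]
  apply Finset.sum_congr rfl
  intro u _
  have hu : E v u.1 := (Finset.mem_filter.mp u.2).2
  rw [dif_pos (hacyc v u.1 hu)]

theorem sum_part {V : Type} [Fintype V] [DecidableEq V] (E : V → V → Prop) [DecidableRel E]
    (vol : V → ℚ)
    (h : ∀ v : V, vol v = ((univ.filter (fun u => E v u)).card : ℚ)
          + ∑ u ∈ univ.filter (fun u => E v u),
              vol u / ((univ.filter (fun x => E x u)).card : ℚ)) :
    ∑ s ∈ univ.filter (fun s => (univ.filter (fun u => E u s)).card = 0), vol s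
          = (((univ ×ˢ univ).filter (fun p : V × V => E p.1 p.2)).card : ℚ) := by
  have htot : ∑ v : V, vol v
      = (((univ ×ˢ univ).filter (fun p : V × V => E p.1 p.2)).card : ℚ)
        + ∑ u ∈ univ.filter (fun u => ¬ ((univ.filter (fun x => E x u)).card = 0)), vol u := by
    calc ∑ v : V, vol v
        = ∑ v : V, (((univ.filter (fun u => E v u)).card : ℚ)
          + ∑ u ∈ univ.filter (fun u => E v u),
              vol u / ((univ.filter (fun x => E x u)).card : ℚ)) :=
          Finset.sum_congr rfl (fun v _ => h v)
      _ = (∑ v : V, ((univ.filter (fun u => E v u)).card : ℚ))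
          + ∑ v : V, ∑ u ∈ univ.filter (fun u => E v u),
              vol u / ((univ.filter (fun x => E x u)).card : ℚ) := Finset.sum_add_distrib
      _ = (((univ ×ˢ univ).filter (fun p : V × V => E p.1 p.2)).card : ℚ)
        + ∑ u ∈ univ.filter (fun u => ¬ ((univ.filter (fun x => E x u)).card = 0)), vol u := by
          congr 1
          · have hcard : ((univ ×ˢ univ).filter (fun p : V × V => E p.1 p.2)).card
                = ∑ v : V, (univ.filter (fun u => E v u)).card := by
              rw [Finset.card_filter, Finset.sum_product]
              exact Finset.sum_congr rfl fun v _ => (Finset.card_filter _ _).symm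
            rw [hcard, Nat.cast_sum]
          · have : ∀ v : V, ∑ u ∈ univ.filter (fun u => E v u),
                vol u / ((univ.filter (fun x => E x u)).card : ℚ)
                = ∑ u : V, if E v u then vol u / ((univ.filter (fun x => E x u)).card : ℚ) else 0 :=
              fun v => (Finset.sum_filter _ _)
            simp_rw [this]
            rw [Finset.sum_comm]
            rw [Finset.sum_filter]
            apply Finset.sum_congr rfl
            intro u _
            rw [← Finset.sum_filter, Finset.sum_const, nsmul_eq_mul]
            by_cases hc : (univ.filter (fun x => E x u)).card = 0
            · simp [hc]
            · rw [if_pos hc]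
              have hq : ((univ.filter (fun x => E x u)).card : ℚ) ≠ 0 := by exact_mod_cast hc
              rw [mul_comm, div_mul_cancel₀ _ hq]
  have hsplit := Finset.sum_filter_add_sum_filter_not univ
    (fun s => (univ.filter (fun u => E u s)).card = 0) vol
  linarith [htot, hsplit]

/-- In a finite DAG (acyclicity witnessed by a rank function decreasing
along edges, i.e. a reverse topological order for the recursion), the recursion
vol(v) = outdeg(v) + Σ_{v→u} vol(u)/indeg(u) has a unique solution (is well-defined),
and, given that every non-source node has positive in-degree, the sum of vol over the
sources (nodes of in-degree 0) equals the total number of edges. -/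
theorem stmt3 {V : Type} [Fintype V] [DecidableEq V]
    (E : V → V → Prop) [DecidableRel E]
    (rank : V → ℕ) (hacyc : ∀ u v, E u v → rank v < rank u)
    (hnonsource : ∀ v : V, ¬ ((univ.filter (fun u => E u v)).card = 0) →
      0 < (univ.filter (fun u => E u v)).card) :
    (∃! vol : V → ℚ, ∀ v : V,
        vol v = ((univ.filter (fun u => E v u)).card : ℚ)
          + ∑ u ∈ univ.filter (fun u => E v u),
              vol u / ((univ.filter (fun x => E x u)).card : ℚ))
    ∧ ∀ vol : V → ℚ,
        (∀ v : V, vol v = ((univ.filter (fun u => E v u)).card : ℚ)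
          + ∑ u ∈ univ.filter (fun u => E v u),
              vol u / ((univ.filter (fun x => E x u)).card : ℚ)) →
        ∑ s ∈ univ.filter (fun s => (univ.filter (fun u => E u s)).card = 0), vol s
          = (((univ ×ˢ univ).filter (fun p : V × V => E p.1 p.2)).card : ℚ) := by
  constructor
  · refine ⟨volAux E rank, volAux_eq E rank hacyc, ?_⟩
    intro vol hvol
    funext v
    have key : ∀ n, ∀ v : V, rank v = n → vol v = volAux E rank v := by
      intro n
      induction n using Nat.strong_induction_on with
      | _ n ih =>
        intro v hv
        rw [hvol v, volAux_eq E rank hacyc v]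
        congr 1
        apply Finset.sum_congr rfl
        intro u hu
        have hE : E v u := by simpa using hu
        rw [ih (rank u) (hv ▸ hacyc v u hE) u rfl]
    exact key (rank v) v rfl
  · exact fun vol hvol => sum_part E vol hvol
end

section
/- In a finite weighted DAG with a unique super-root connected to all sources, the multiple-inherited knowledge-tree volume satisfies conservation under fragmentation: for every node α, the recursively defined volume vol(α) = outdeg(α) + Σ_{children α⁺ of α} vol(α⁺)/indeg(α⁺) equals the sum Σ_{fragments α_i of α} V(α_i), where fragments are obtained by recursively splitting each node of in-degree k into k copies, each copy receiving an equal (1/k) share of the sub-tree volume. -/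
open Finset

namespace Stmt14Aux

variable {V : Type} [Fintype V] [DecidableEq V] (E : V → V → Prop) [DecidableRel E]

def ideg (u : V) : ℕ := (univ.filter (fun x => E x u)).card

noncomputable def gg (l : List V) : ℝ :=
  ((l.dropLast).map (fun u => (1 : ℝ) / (ideg E u : ℝ))).prod

def QQ (v : V) (l : List V) : Prop :=
  l.Chain' (fun a b => E b a) ∧ l.head? = some v ∧
    ∃ s, l.getLast? = some s ∧ ideg E s = 0

lemma chainE_nodup (rank : V → ℕ) (hacyc : ∀ u v, E u v → rank u < rank v)
    {l : List V} (h : l.Chain' E) : l.Nodup := by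
  have h1 : l.Chain' (fun a b => rank a < rank b) := h.imp (fun a b hab => hacyc a b hab)
  have h2 : (l.map rank).Chain' (· < ·) := (List.isChain_map rank).mpr h1
  have h3 : (l.map rank).Pairwise (· < ·) := List.isChain_iff_pairwise.mp h2
  have h4 : (l.map rank).Nodup := h3.imp ne_of_lt
  exact List.Nodup.of_map rank h4

lemma chainQ_nodup (rank : V → ℕ) (hacyc : ∀ u v, E u v → rank u < rank v)
    {l : List V} (h : l.Chain' (fun a b => E b a)) : l.Nodup := by
  rw [← List.nodup_reverse]
  exact chainE_nodup E rank hacyc (List.isChain_reverse.mpr h)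

lemma finite_QQ (rank : V → ℕ) (hacyc : ∀ u v, E u v → rank u < rank v) (v : V) :
    {l : List V | QQ E v l}.Finite := by
  have hft : Fintype ↥{l : List V | l.Nodup} := fintypeNodupList
  apply Set.Finite.subset (@Set.toFinite _ _ hft.finite)
  intro l hl
  exact chainQ_nodup E rank hacyc hl.1

noncomputable def pathsTo (rank : V → ℕ) (hacyc : ∀ u v, E u v → rank u < rank v)
    (v : V) : Finset (List V) :=
  (finite_QQ E rank hacyc v).toFinset

lemma mem_pathsTo (rank : V → ℕ) (hacyc : ∀ u v, E u v → rank u < rank v)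
    {v : V} {l : List V} :
    l ∈ pathsTo E rank hacyc v ↔ QQ E v l := Set.Finite.mem_toFinset _

lemma key (rank : V → ℕ) (hacyc : ∀ u v, E u v → rank u < rank v) :
    ∀ (n : ℕ) (v : V), rank v = n →
    ∑ l ∈ pathsTo E rank hacyc v, gg E l = 1 := by
  intro n
  induction n using Nat.strong_induction_on with
  | _ n ih =>
    intro v hv
    by_cases h0 : ideg E v = 0
    · have hne : ∀ u : V, ¬ E u v := by
        intro u hE
        have hm : u ∈ univ.filter (fun x => E x v) := by simp [hE]
        rw [Finset.card_eq_zero.mp h0] at hm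
        exact absurd hm (Finset.notMem_empty u)
      have hset : pathsTo E rank hacyc v = {[v]} := by
        ext l
        simp only [mem_pathsTo, Finset.mem_singleton]
        constructor
        · rintro ⟨hc, hh, s, hgl, hs⟩
          cases l with
          | nil => simp at hh
          | cons a t =>
            have ha : v = a := (by simpa using hh : a = v).symm
            subst ha
            cases t with
            | nil => rfl
            | cons u t' =>
              exact absurd (List.isChain_cons_cons.mp hc).1 (hne u)
        · rintro rfl
          exact ⟨List.isChain_singleton v, rfl, v, rfl, h0⟩
      rw [hset, Finset.sum_singleton]
      simp [gg]
    · have hdec : ∀ l ∈ pathsTo E rank hacyc v,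
          ∃ u t', l = v :: u :: t' ∧ E u v ∧ QQ E u (u :: t') := by
        intro l hl
        obtain ⟨hc, hh, s, hgl, hs⟩ := (mem_pathsTo E rank hacyc).mp hl
        cases l with
        | nil => simp at hh
        | cons a t =>
          have ha : v = a := (by simpa using hh : a = v).symm
          subst ha
          cases t with
          | nil =>
            exfalso
            have hsv : s = v := by simpa using hgl.symm
            exact h0 (hsv ▸ hs)
          | cons u t' =>
            obtain ⟨hE, hc'⟩ := List.isChain_cons_cons.mp hc
            refine ⟨u, t', rfl, hE, hc', rfl, s, ?_, hs⟩
            simpa using hgl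
      have hbij : ∑ l ∈ pathsTo E rank hacyc v, gg E l
          = ∑ p ∈ (univ.filter (fun u => E u v)).sigma
                (fun u => pathsTo E rank hacyc u),
              (1 / (ideg E v : ℝ)) * gg E p.2 := by
        apply Finset.sum_nbij'
          (fun l => (⟨l.tail.head?.getD v, l.tail⟩ : Σ _ : V, List V))
          (fun p => v :: p.2)
        · intro l hl
          obtain ⟨u, t', rfl, hE, hQ⟩ := hdec l hl
          simp only [List.tail_cons, List.head?_cons, Option.getD_some]
          exact Finset.mem_sigma.mpr ⟨by simp [hE], (mem_pathsTo E rank hacyc).mpr hQ⟩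
        · rintro ⟨u0, l0⟩ hp
          obtain ⟨hp1, hp2⟩ := Finset.mem_sigma.mp hp
          have hE : E u0 v := by simpa using hp1
          obtain ⟨hc, hh, s, hgl, hs⟩ := (mem_pathsTo E rank hacyc).mp hp2
          cases l0 with
          | nil => simp at hh
          | cons u t' =>
            have hu : u0 = u := (by simpa using hh : u = u0).symm
            subst hu
            apply (mem_pathsTo E rank hacyc).mpr
            refine ⟨List.isChain_cons_cons.mpr ⟨hE, hc⟩, rfl, s, ?_, hs⟩
            simpa using hgl
        · intro l hl
          obtain ⟨u, t', rfl, hE, hQ⟩ := hdec l hl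
          rfl
        · rintro ⟨u0, l0⟩ hp
          obtain ⟨hp1, hp2⟩ := Finset.mem_sigma.mp hp
          obtain ⟨hc, hh, s, hgl, hs⟩ := (mem_pathsTo E rank hacyc).mp hp2
          cases l0 with
          | nil => simp at hh
          | cons u t' =>
            have hu : u0 = u := (by simpa using hh : u = u0).symm
            subst hu
            simp
        · intro l hl
          obtain ⟨u, t', rfl, hE, hQ⟩ := hdec l hl
          show gg E (v :: u :: t') = 1 / (ideg E v : ℝ) * gg E (v :: u :: t').tail
          simp only [List.tail_cons]
          show ((v :: (u :: t').dropLast).map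
              (fun u => (1 : ℝ) / (ideg E u : ℝ))).prod = _
          rw [List.map_cons, List.prod_cons]
          rfl
      rw [hbij, Finset.sum_sigma]
      have hsum : ∀ u ∈ univ.filter (fun u => E u v),
          ∑ t ∈ pathsTo E rank hacyc u, (1 / (ideg E v : ℝ)) * gg E t
            = 1 / (ideg E v : ℝ) := by
        intro u hu
        have hE : E u v := by simpa using hu
        have hru : rank u < n := hv ▸ hacyc u v hE
        rw [← Finset.mul_sum, ih (rank u) hru u rfl, mul_one]
      rw [Finset.sum_congr rfl hsum, Finset.sum_const, nsmul_eq_mul]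
      have hcard : ((univ.filter (fun u => E u v)).card : ℝ) = (ideg E v : ℝ) := rfl
      rw [hcard]
      have hnz : (ideg E v : ℝ) ≠ 0 := Nat.cast_ne_zero.mpr h0
      field_simp

end Stmt14Aux

open Stmt14Aux


/-- Volume conservation under fragmentation in a finite DAG
(acyclicity witnessed by a rank function increasing along edges). The fragments of a
node v correspond to the directed paths from some source (in-degree 0) to v; the
fragment for a path gets the share of vol(v) weighted by the product of 1/indeg(u)
over the non-source nodes u along the path. The recursively defined volume
vol(v) = outdeg(v) + Σ_{v→u} vol(u)/indeg(u) equals the sum of its fragments'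
volumes. -/
theorem stmt14 {V : Type} [Fintype V] [DecidableEq V]
    (E : V → V → Prop) [DecidableRel E]
    (rank : V → ℕ) (hacyc : ∀ u v, E u v → rank u < rank v)
    (vol : V → ℝ)
    (hvol : ∀ v : V,
      vol v = ((univ.filter (fun u => E v u)).card : ℝ)
        + ∑ u ∈ univ.filter (fun u => E v u),
            vol u / ((univ.filter (fun x => E x u)).card : ℝ)) :
    ∀ v : V,
      vol v
        = ∑' l : {l : List V // l.Chain' E
              ∧ (∃ s, l.head? = some s ∧ (univ.filter (fun u => E u s)).card = 0)
              ∧ l.getLast? = some v},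
            vol v *
              ((l.val.tail).map
                (fun u => (1 : ℝ) / ((univ.filter (fun x => E x u)).card : ℝ))).prod := by

  intro v
  have hiff : ∀ l : List V,
      (l.Chain' E
        ∧ (∃ s, l.head? = some s ∧ (univ.filter (fun u => E u s)).card = 0)
        ∧ l.getLast? = some v) ↔ QQ E v l.reverse := by
    intro l
    constructor
    · rintro ⟨hc, ⟨s, hh, hs⟩, hgl⟩
      refine ⟨List.isChain_reverse.mpr hc, ?_, s, ?_, hs⟩
      · rw [List.head?_reverse]; exact hgl
      · rw [List.getLast?_reverse]; exact hh
    · rintro ⟨hc, hh, s, hgl, hs⟩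
      refine ⟨(List.isChain_reverse.mp hc).imp (fun a b h => h), ⟨s, ?_, hs⟩, ?_⟩
      · rw [← List.getLast?_reverse]; exact hgl
      · rw [← List.head?_reverse]; exact hh
  have hgf : ∀ l : List V,
      ((l.tail).map (fun u => (1 : ℝ) / ((univ.filter (fun x => E x u)).card : ℝ))).prod
        = gg E l.reverse := by
    intro l
    have hdl : l.reverse.dropLast = l.tail.reverse := by
      have h1 : l.reverse.reverse.tail = l.reverse.dropLast.reverse :=
        List.tail_reverse (l := l.reverse)
      rw [List.reverse_reverse] at h1
      rw [← List.reverse_reverse (l.reverse.dropLast), ← h1]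
    rw [gg, hdl, List.map_reverse, List.prod_reverse]
    rfl
  have hfinP : {l : List V | l.Chain' E
      ∧ (∃ s, l.head? = some s ∧ (univ.filter (fun u => E u s)).card = 0)
      ∧ l.getLast? = some v}.Finite := by
    have hft : Fintype ↥{l : List V | l.Nodup} := fintypeNodupList
    apply Set.Finite.subset (@Set.toFinite _ _ hft.finite)
    intro l hl
    exact chainE_nodup E rank hacyc hl.1
  haveI : Fintype {l : List V // l.Chain' E
      ∧ (∃ s, l.head? = some s ∧ (univ.filter (fun u => E u s)).card = 0)
      ∧ l.getLast? = some v} := hfinP.fintype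
  rw [tsum_mul_left, tsum_fintype]
  have hmem : ∀ x : List V, x ∈ hfinP.toFinset ↔ (x.Chain' E
      ∧ (∃ s, x.head? = some s ∧ (univ.filter (fun u => E u s)).card = 0)
      ∧ x.getLast? = some v) := fun x => hfinP.mem_toFinset
  rw [← Finset.sum_subtype hfinP.toFinset hmem
    (fun l => ((l.tail).map
      (fun u => (1 : ℝ) / ((univ.filter (fun x => E x u)).card : ℝ))).prod)]
  have hrev : ∑ l ∈ hfinP.toFinset,
      ((l.tail).map (fun u => (1 : ℝ) / ((univ.filter (fun x => E x u)).card : ℝ))).prod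
      = ∑ r ∈ pathsTo E rank hacyc v, gg E r := by
    apply Finset.sum_nbij' (fun l => l.reverse) (fun r => r.reverse)
    · intro l hl
      rw [mem_pathsTo E rank hacyc]
      exact (hiff l).mp (hfinP.mem_toFinset.mp hl)
    · intro r hr
      rw [hfinP.mem_toFinset]
      apply (hiff r.reverse).mpr
      rw [List.reverse_reverse]
      exact (mem_pathsTo E rank hacyc).mp hr
    · intro l _; exact List.reverse_reverse l
    · intro r _; exact List.reverse_reverse r
    · intro l _; exact hgf l
  rw [hrev, key E rank hacyc (rank v) v rfl, mul_one]
end
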